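/- For all k ≥ 1, the minimum value of s(n) over n in the interval [4^k, 4^(k+1) − 1] is 2^k + 1, and this minimum is attained only at n = 4^k and n = (5·4^k − 2)/3. -/

import Mathlib

def rs : ℕ → ℤ
  | 0 => 1
  | (n+1) =>
    if (n+1) % 2 = 0 then rs ((n+1)/2)
    else (-1)^((n+1)/2) * rs ((n+1)/2)
decreasing_by all_goals exact Nat.div_lt_self (Nat.succ_pos n) (by norm_num)

def s (n : ℕ) : ℤ := ∑ i ∈ Finset.range (n+1), rs i

def t (n : ℕ) : ℤ := ∑ i ∈ Finset.range (n+1), (-1)^i * rs i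

/-!
Writing `t n = ∑_{i ≤ n} (-1)^i a(i)`, the recursions for `a` give `s(2n+1) = s(n) + t(n)` and
`t(2n+1) = s(n) - t(n)`, hence `s(4m+1) = s(4m+3) = 2 s(m)`, `s(4m) = 2 s(m) - a(4m+1)` and
`s(4m+2) = 2 s(m) - a(4m+3)`. Since `a = ±1`, `s(n) ≥ 2 s(⌊n/4⌋) - 1`, with equality exactly when
`n` is even and `a(n+1) = 1`. So by induction on `k` the minimisers on `[4^(k+1), 4^(k+2))` are the
`n ∈ {4m, 4m+2}` with `m` a minimiser on `[4^k, 4^(k+1))` and `a(n+1) = 1`; starting from `{4, 6}`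
at `k = 1`, this yields `4^(k+1)` and `4 u_k + 2 = u_(k+1)`, where `u_k = (5·4^k - 2)/3`.
-/

lemma rs_two_mul : ∀ n : ℕ, rs (2 * n) = rs n
  | 0 => rfl
  | n + 1 => by
    rw [show 2 * (n + 1) = (2 * n + 1) + 1 by ring, rs, if_pos (by omega)]
    congr 1
    omega

lemma rs_two_mul_add_one : ∀ n : ℕ, rs (2 * n + 1) = (-1) ^ n * rs n
  | 0 => by simp [rs]
  | n + 1 => by
    rw [rs, if_neg (by omega), show (2 * (n + 1) + 1) / 2 = n + 1 by omega]

lemma abs_rs (n : ℕ) : |rs n| = 1 := by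
  induction n using Nat.evenOddRec with
  | h0 => simp [rs]
  | h_even n ih => rwa [rs_two_mul]
  | h_odd n ih => simp [rs_two_mul_add_one, abs_mul, ih]

lemma rs_le_one (n : ℕ) : rs n ≤ 1 := abs_rs n ▸ le_abs_self (rs n)

lemma rs_four_mul (n : ℕ) : rs (4 * n) = rs n := by
  rw [show 4 * n = 2 * (2 * n) by ring, rs_two_mul, rs_two_mul]

lemma rs_four_mul_add_one (n : ℕ) : rs (4 * n + 1) = rs n := by
  rw [show 4 * n + 1 = 2 * (2 * n) + 1 by ring, rs_two_mul_add_one, rs_two_mul,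
    (even_two_mul n).neg_one_pow, one_mul]

lemma rs_four_mul_add_two (n : ℕ) : rs (4 * n + 2) = (-1) ^ n * rs n := by
  rw [show 4 * n + 2 = 2 * (2 * n + 1) by ring, rs_two_mul, rs_two_mul_add_one]

lemma rs_four_mul_add_three (n : ℕ) : rs (4 * n + 3) = -((-1) ^ n * rs n) := by
  rw [show 4 * n + 3 = 2 * (2 * n + 1) + 1 by ring, rs_two_mul_add_one, rs_two_mul_add_one,
    (odd_two_mul_add_one n).neg_one_pow, neg_one_mul]

lemma rs_four_pow (k : ℕ) : rs (4 ^ k) = 1 := by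
  induction k with
  | zero => norm_num [rs]
  | succ k ih => rw [pow_succ', rs_four_mul, ih]

lemma s_add_one (n : ℕ) : s (n + 1) = s n + rs (n + 1) := Finset.sum_range_succ _ _

lemma t_add_one (n : ℕ) : t (n + 1) = t n + (-1) ^ (n + 1) * rs (n + 1) :=
  Finset.sum_range_succ _ _

lemma s_two_mul_add_one (n : ℕ) : s (2 * n + 1) = s n + t n := by
  induction n with
  | zero => simp [s, t, Finset.sum_range_succ, rs]
  | succ n ih =>
    rw [show 2 * (n + 1) + 1 = 2 * n + 1 + 1 + 1 by ring, s_add_one, s_add_one, ih,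
      show 2 * n + 1 + 1 = 2 * (n + 1) by ring, rs_two_mul, rs_two_mul_add_one, s_add_one,
      t_add_one]
    ring

lemma t_two_mul_add_one (n : ℕ) : t (2 * n + 1) = s n - t n := by
  induction n with
  | zero => simp [s, t, Finset.sum_range_succ, rs]
  | succ n ih =>
    rw [show 2 * (n + 1) + 1 = 2 * n + 1 + 1 + 1 by ring, t_add_one, t_add_one, ih,
      show 2 * n + 1 + 1 = 2 * (n + 1) by ring, rs_two_mul, rs_two_mul_add_one, s_add_one,
      t_add_one, (even_two_mul (n + 1)).neg_one_pow, (odd_two_mul_add_one (n + 1)).neg_one_pow]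
    ring

lemma s_add_t (n : ℕ) : s n + t n = 2 * s (n / 2) := by
  obtain ⟨m, rfl | rfl⟩ := Nat.even_or_odd' n
  · have hs := s_add_one (2 * m)
    have ht := t_add_one (2 * m)
    rw [s_two_mul_add_one] at hs
    rw [(odd_two_mul_add_one m).neg_one_pow, t_two_mul_add_one] at ht
    rw [show 2 * m / 2 = m by omega]
    linarith
  · rw [s_two_mul_add_one, t_two_mul_add_one, show (2 * m + 1) / 2 = m by omega]
    ring

lemma s_of_odd {n : ℕ} (hn : Odd n) : s n = 2 * s (n / 4) := by
  obtain ⟨m, rfl⟩ := hn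
  rw [s_two_mul_add_one, s_add_t, show (2 * m + 1) / 4 = m / 2 by omega]

lemma s_of_even {n : ℕ} (hn : Even n) : s n = 2 * s (n / 4) - rs (n + 1) := by
  have h := s_add_one n
  rw [s_of_odd hn.add_one, show (n + 1) / 4 = n / 4 by obtain ⟨m, rfl⟩ := hn; omega] at h
  linarith

lemma le_s_and_s_eq_iff (k n : ℕ) (hs : 2 ^ k + 1 ≤ s (n / 4)) :
    2 ^ (k + 1) + 1 ≤ s n ∧
      (s n = 2 ^ (k + 1) + 1 ↔ s (n / 4) = 2 ^ k + 1 ∧ Even n ∧ rs (n + 1) = 1) := by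
  rw [pow_succ]
  rcases Nat.even_or_odd n with hn | hn
  · have hr := rs_le_one (n + 1)
    rw [s_of_even hn]
    refine ⟨by linarith, fun h ↦ ⟨by linarith, hn, by linarith⟩, ?_⟩
    rintro ⟨hm, -, hr⟩
    rw [hm, hr]
    ring
  · rw [s_of_odd hn]
    refine ⟨by linarith, fun h ↦ by linarith, ?_⟩
    rintro ⟨-, hn', -⟩
    exact absurd hn (Nat.not_odd_iff_even.mpr hn')

def secondArgmin (k : ℕ) : ℕ := (5 * 4 ^ k - 2) / 3

lemma secondArgmin_succ (k : ℕ) : secondArgmin (k + 1) = 4 * secondArgmin k + 2 := by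
  have h3 : 4 ^ k % 3 = 1 := by rw [Nat.pow_mod]; norm_num
  have h1 : 1 ≤ 4 ^ k := Nat.one_le_pow _ _ (by norm_num)
  unfold secondArgmin
  rw [pow_succ]
  omega

lemma even_secondArgmin {k : ℕ} (hk : 1 ≤ k) : Even (secondArgmin k) := by
  obtain ⟨k, rfl⟩ := Nat.exists_eq_add_of_le' hk
  rw [secondArgmin_succ]
  exact ⟨2 * secondArgmin k + 1, by ring⟩

lemma rs_secondArgmin {k : ℕ} (hk : 1 ≤ k) : rs (secondArgmin k) = -1 := by
  induction k, hk using Nat.le_induction with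
  | base => norm_num [secondArgmin, rs]
  | succ k hk ih =>
    rw [secondArgmin_succ, rs_four_mul_add_two, (even_secondArgmin hk).neg_one_pow, ih, one_mul]

lemma div_four_mem_and_rs_add_one_iff {k : ℕ} (hk : 1 ≤ k) (n : ℕ) :
    (n / 4 = 4 ^ k ∨ n / 4 = secondArgmin k) ∧ Even n ∧ rs (n + 1) = 1 ↔
      n = 4 ^ (k + 1) ∨ n = secondArgmin (k + 1) := by
  have hp : Even (4 ^ k) := (Nat.even_pow' (by omega)).mpr (by decide)
  have hu := even_secondArgmin hk
  rw [pow_succ', secondArgmin_succ]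
  constructor
  · rintro ⟨hm, hn, hr⟩
    have hn4 : n = 4 * (n / 4) ∨ n = 4 * (n / 4) + 2 := by obtain ⟨j, rfl⟩ := hn; omega
    rcases hm with hm | hm <;> rcases hn4 with h | h <;> rw [hm] at h <;> subst h
    · exact Or.inl rfl
    · rw [add_assoc, rs_four_mul_add_three, hp.neg_one_pow, rs_four_pow] at hr
      norm_num at hr
    · rw [rs_four_mul_add_one, rs_secondArgmin hk] at hr
      norm_num at hr
    · exact Or.inr rfl
  · rintro (rfl | rfl)
    · refine ⟨Or.inl (by omega), ⟨2 * 4 ^ k, by ring⟩, ?_⟩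
      rw [rs_four_mul_add_one, rs_four_pow]
    · refine ⟨Or.inr (by omega), ⟨2 * secondArgmin k + 1, by ring⟩, ?_⟩
      rw [add_assoc, rs_four_mul_add_three, hu.neg_one_pow, rs_secondArgmin hk]
      norm_num

theorem s_min_on_four_pow_block (k : ℕ) (hk : 1 ≤ k) (n : ℕ) (h₁ : 4 ^ k ≤ n)
    (h₂ : n < 4 ^ (k + 1)) :
    2 ^ k + 1 ≤ s n ∧ (s n = 2 ^ k + 1 ↔ n = 4 ^ k ∨ n = secondArgmin k) := by
  induction k, hk using Nat.le_induction generalizing n with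
  | base =>
    norm_num at h₁ h₂
    interval_cases n <;> norm_num [s, Finset.sum_range_succ, rs, secondArgmin]
  | succ k hk ih =>
    obtain ⟨hle, heq⟩ := ih (n / 4) (by rw [pow_succ] at h₁; omega)
      (by rw [pow_succ] at h₂; omega)
    obtain ⟨hle', heq'⟩ := le_s_and_s_eq_iff k n hle
    rw [heq', heq]
    exact ⟨hle', div_four_mem_and_rs_add_one_iff hk n⟩

theorem stmt11 : ∀ k : ℕ, 1 ≤ k →
    (∀ n : ℕ, 4^k ≤ n → n ≤ 4^(k+1) - 1 → (2^k + 1 : ℤ) ≤ s n) ∧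
    (∀ n : ℕ, 4^k ≤ n → n ≤ 4^(k+1) - 1 →
      (s n = 2^k + 1 ↔ n = 4^k ∨ n = (5 * 4^k - 2)/3)) := by
  intro k hk
  have h (n : ℕ) (h₁ : 4 ^ k ≤ n) (h₂ : n ≤ 4 ^ (k + 1) - 1) :=
    s_min_on_four_pow_block k hk n h₁ (Nat.lt_of_le_pred (by positivity) h₂)
  exact ⟨fun n h₁ h₂ ↦ (h n h₁ h₂).1, fun n h₁ h₂ ↦ (h n h₁ h₂).2⟩
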